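/- Let T = T(A,D) be a self-affine ℤⁿ-tile defined by A·T = T + D with maps φ_d(x) = A⁻¹(x + d). If there exists a connected set E ⊂ int(T) such that E ∩ φ_d(E) ≠ ∅ for each d ∈ D, then int(T) is connected. -/

import Mathlib

open Set Matrix

/-- The real matrix obtained from an integer matrix. -/
def intMatToReal {n : ℕ} (A : Matrix (Fin n) (Fin n) ℤ) : Matrix (Fin n) (Fin n) ℝ :=
  A.map (Int.cast : ℤ → ℝ)

/-- The real vector obtained from an integer vector. -/
def intVecToReal {n : ℕ} (z : Fin n → ℤ) : Fin n → ℝ := fun i => (z i : ℝ)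

open Filter Topology

/-! The images of `E` under all compositions `φ_{d₁} ∘ ⋯ ∘ φ_{dₖ}` form a set `U ⊆ int T`, since
each `φ_d` is an open map sending `T` into itself. `U` is connected: the component of `U`
containing `E` is mapped into itself by every `φ_d`, its image being connected and meeting `E`.
`U` is dense in `T`: every point of `T` is `φ_{d₁} ∘ ⋯ ∘ φ_{dₖ} (s)` with `s ∈ T`, and this differs
from `φ_{d₁} ∘ ⋯ ∘ φ_{dₖ} (x₀)`, `x₀ ∈ E`, by `A⁻ᵏ (s - x₀)`, where `A⁻ᵏ → 0` because by Gelfand's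
formula the spectral radius of `A⁻¹` is below one. So `U ⊆ int T ⊆ closure U`. -/

theorem tendsto_pow_atTop_nhds_zero_of_spectralRadius_lt_one {A : Type*} [NormedRing A]
    [NormedAlgebra ℂ A] [CompleteSpace A] {a : A} (ha : spectralRadius ℂ a < 1) :
    Tendsto (fun k => a ^ k) atTop (𝓝 0) := by
  obtain ⟨r, hρr, hr1⟩ := ENNReal.lt_iff_exists_nnreal_btwn.mp ha
  have hbound : ∀ᶠ k : ℕ in atTop, ‖a ^ k‖ ≤ (r : ℝ) ^ k := by
    filter_upwards [(spectrum.pow_nnnorm_pow_one_div_tendsto_nhds_spectralRadius a)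
      |>.eventually_lt_const hρr, eventually_gt_atTop 0] with k hk hk0
    rw [one_div, ENNReal.rpow_inv_lt_iff (by positivity), ENNReal.rpow_natCast] at hk
    exact_mod_cast hk.le
  exact squeeze_zero_norm' hbound
    (tendsto_pow_atTop_nhds_zero_of_lt_one r.2 (by exact_mod_cast hr1))

namespace Matrix

variable {ι m : Type*} [Fintype m] [DecidableEq m]

def IsExpanding (M : Matrix m m ℂ) : Prop :=
  ∀ μ ∈ M.charpoly.roots, 1 < ‖μ‖

theorem IsExpanding.det_ne_zero {M : Matrix m m ℂ} (hM : M.IsExpanding) : M.det ≠ 0 := by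
  rw [det_eq_prod_roots_charpoly]
  exact Multiset.prod_ne_zero fun h0 => (hM 0 h0).not_ge (norm_zero.trans_le zero_le_one)

theorem IsExpanding.spectralRadius_inv_lt_one {M : Matrix m m ℂ} (hM : M.IsExpanding) :
    spectralRadius ℂ M⁻¹ < 1 := by
  let := Matrix.linftyOpNormedRing (n := m) (α := ℂ)
  let := Matrix.linftyOpNormedAlgebra (n := m) (R := ℂ) (α := ℂ)
  rcases (spectrum ℂ M⁻¹).eq_empty_or_nonempty with hσ | hσ
  · simp [spectralRadius, hσ]
  refine spectrum.spectralRadius_lt_of_forall_lt_of_nonempty hσ fun z hz => ?_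
  have hz' : z⁻¹ ∈ spectrum ℂ M :=
    spectrum.inv₀_mem_iff (a := nonsingInvUnit M hM.det_ne_zero.isUnit) |>.mpr hz
  have hroot := hM _ ((Polynomial.mem_roots M.charpoly_monic.ne_zero).mpr
    (mem_spectrum_iff_isRoot_charpoly.mp hz'))
  rw [norm_inv, one_lt_inv_iff₀] at hroot
  exact_mod_cast hroot.2

theorem IsExpanding.tendsto_inv_pow {M : Matrix m m ℂ} (hM : M.IsExpanding) :
    Tendsto (fun k => M⁻¹ ^ k) atTop (𝓝 0) := by
  -- any matrix norm will do: its topology is the product topology used in the statement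
  let := Matrix.linftyOpNormedRing (n := m) (α := ℂ)
  let := Matrix.linftyOpNormedAlgebra (n := m) (R := ℂ) (α := ℂ)
  exact tendsto_pow_atTop_nhds_zero_of_spectralRadius_lt_one hM.spectralRadius_inv_lt_one

theorem det_ne_zero_of_isExpanding_map_ofReal {B : Matrix m m ℝ}
    (hB : (B.map Complex.ofReal).IsExpanding) : B.det ≠ 0 := fun h => hB.det_ne_zero <| by
  change (Complex.ofRealHom.mapMatrix B).det = 0
  rw [← RingHom.map_det, h, map_zero]

theorem tendsto_inv_pow_of_isExpanding_map_ofReal {B : Matrix m m ℝ}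
    (hB : (B.map Complex.ofReal).IsExpanding) : Tendsto (fun k => B⁻¹ ^ k) atTop (𝓝 0) := by
  have hinv : (Complex.ofRealHom.mapMatrix B)⁻¹ = Complex.ofRealHom.mapMatrix B⁻¹ := by
    refine inv_eq_left_inv ?_
    rw [← map_mul, nonsing_inv_mul _ (det_ne_zero_of_isExpanding_map_ofReal hB).isUnit, map_one]
  have hre := ((continuous_id.matrix_map Complex.continuous_re).tendsto 0).comp hB.tendsto_inv_pow
  convert hre using 1
  · ext k : 1
    change B⁻¹ ^ k = ((Complex.ofRealHom.mapMatrix B)⁻¹ ^ k).map Complex.re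
    rw [hinv, ← map_pow]
    ext i j
    simp
  · simp

theorem foldr_mulVec_add_sub_foldr {R : Type*} [CommRing R] (C : Matrix m m R) (v : ι → m → R)
    (l : List ι) (a b : m → R) :
    l.foldr (fun i x => C *ᵥ (x + v i)) a - l.foldr (fun i x => C *ᵥ (x + v i)) b =
      (C ^ l.length) *ᵥ (a - b) := by
  induction l with
  | nil => simp
  | cons d l ih =>
    rw [List.foldr_cons, List.foldr_cons, ← mulVec_sub, add_sub_add_right_eq_sub, ih,
      mulVec_mulVec, List.length_cons, pow_succ']

theorem exists_forall_dist_foldr_mulVec_add_lt {C : Matrix m m ℝ}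
    (hC : Tendsto (fun k => C ^ k) atTop (𝓝 0)) (v : ι → m → ℝ) {T : Set (m → ℝ)}
    (hT : Bornology.IsBounded T) {ε : ℝ} (hε : 0 < ε) :
    ∃ k, ∀ l : List ι, l.length = k → ∀ a ∈ T, ∀ b ∈ T,
        dist (l.foldr (fun i x => C *ᵥ (x + v i)) a) (l.foldr (fun i x => C *ᵥ (x + v i)) b)
        < ε := by
  let := Matrix.linftyOpNormedRing (n := m) (α := ℝ)
  obtain ⟨R, hR⟩ := Metric.isBounded_iff.mp hT
  have hlim : Tendsto (fun k => ‖C ^ k‖ * R) atTop (𝓝 0) := by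
    simpa using hC.norm.mul_const R
  obtain ⟨k, hk⟩ := (hlim.eventually_lt_const hε).exists
  refine ⟨k, fun l hl a ha b hb => ?_⟩
  calc _ = ‖(C ^ k) *ᵥ (a - b)‖ := by rw [dist_eq_norm, foldr_mulVec_add_sub_foldr, hl]
    _ ≤ ‖C ^ k‖ * ‖a - b‖ := linfty_opNorm_mulVec _ _
    _ ≤ ‖C ^ k‖ * R := by gcongr; exact dist_eq_norm a b ▸ hR ha hb
    _ < ε := hk

variable {K : Type*} [Field K]

theorem eq_iUnion_image_inv_mulVec_add {B : Matrix m m K} (hB : IsUnit B.det) {D : Set ι}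
    (v : ι → m → K) {T : Set (m → K)} (hT : (B *ᵥ ·) '' T = ⋃ d ∈ D, (· + v d) '' T) :
    T = ⋃ d ∈ D, (fun x => B⁻¹ *ᵥ (x + v d)) '' T := by
  have := congrArg (image (B⁻¹ *ᵥ ·)) hT
  simpa only [image_image, image_iUnion₂, mulVec_mulVec, nonsing_inv_mul _ hB, one_mulVec,
    image_id'] using this

theorem isOpenMap_inv_mulVec_add [TopologicalSpace K] [IsTopologicalRing K] {B : Matrix m m K}
    (hB : IsUnit B.det) (w : m → K) :
    IsOpenMap fun x => B⁻¹ *ᵥ (x + w) :=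
  IsOpenMap.of_inverse (f' := fun y => B *ᵥ y - w) (by fun_prop)
    (fun y => by simp [mulVec_mulVec, nonsing_inv_mul _ hB])
    (fun x => by simp [mulVec_mulVec, mul_nonsing_inv _ hB])

end Matrix

section WordOrbit

variable {ι X : Type*} (f : ι → X → X) (D : Set ι)

def wordOrbit (E : Set X) : Set X :=
  ⋃ (l : List ι) (_ : ∀ i ∈ l, i ∈ D), l.foldr f '' E

variable {f D} {E : Set X}

theorem subset_wordOrbit : E ⊆ wordOrbit f D E :=
  fun x hx => mem_iUnion₂.mpr ⟨[], by simp, x, hx, rfl⟩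

theorem mapsTo_wordOrbit {d : ι} (hd : d ∈ D) :
    MapsTo (f d) (wordOrbit f D E) (wordOrbit f D E) := by
  intro y hy
  obtain ⟨l, hl, x, hx, rfl⟩ := mem_iUnion₂.mp hy
  refine mem_iUnion₂.mpr ⟨d :: l, ?_, x, hx, rfl⟩
  simpa [hd] using hl

theorem wordOrbit_subset {S : Set X} (hES : E ⊆ S) (hS : ∀ d ∈ D, MapsTo (f d) S S) :
    wordOrbit f D E ⊆ S := by
  refine iUnion₂_subset fun l hl => ?_
  induction l with
  | nil => simpa using hES
  | cons d l ih =>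
    rintro - ⟨x, hx, rfl⟩
    have hl' : ∀ i ∈ l, i ∈ D := fun i hi => hl i (List.mem_cons_of_mem d hi)
    exact hS d (hl d List.mem_cons_self) (ih hl' ⟨x, hx, rfl⟩)

theorem isConnected_wordOrbit [TopologicalSpace X] (hE : IsConnected E)
    (hf : ∀ d ∈ D, Continuous (f d)) (hmeet : ∀ d ∈ D, (E ∩ f d '' E).Nonempty) :
    IsConnected (wordOrbit f D E) := by
  obtain ⟨x₀, hx₀⟩ := hE.nonempty
  set K := connectedComponentIn (wordOrbit f D E) x₀
  have hEK : E ⊆ K := hE.isPreconnected.subset_connectedComponentIn hx₀ subset_wordOrbit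
  have hinv : ∀ d ∈ D, MapsTo (f d) K K := by
    intro d hd
    obtain ⟨z, hzE, hz⟩ := hmeet d hd
    have hsub : f d '' K ⊆ wordOrbit f D E :=
      ((mapsTo_wordOrbit hd).mono_left (connectedComponentIn_subset _ _)).image_subset
    refine mapsTo_iff_image_subset.mpr (.trans ?_ (connectedComponentIn_eq (hEK hzE)).symm.subset)
    exact (isPreconnected_connectedComponentIn.image _ (hf d hd).continuousOn)
      |>.subset_connectedComponentIn (image_mono hEK hz) hsub
  have hK : K = wordOrbit f D E :=
    (connectedComponentIn_subset _ _).antisymm (wordOrbit_subset hEK hinv)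
  exact ⟨⟨x₀, subset_wordOrbit hx₀⟩, hK ▸ isPreconnected_connectedComponentIn⟩

theorem exists_foldr_eq_of_subset_iUnion_image {T : Set X} (hT : T ⊆ ⋃ d ∈ D, f d '' T)
    (k : ℕ) {x : X} (hx : x ∈ T) :
    ∃ l : List ι, l.length = k ∧ (∀ i ∈ l, i ∈ D) ∧ ∃ s ∈ T, l.foldr f s = x := by
  induction k generalizing x with
  | zero => exact ⟨[], rfl, by simp, x, hx, rfl⟩
  | succ k ih =>
    obtain ⟨d, hd, y, hy, rfl⟩ := mem_iUnion₂.mp (hT hx)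
    obtain ⟨l, hlen, hl, s, hs, rfl⟩ := ih hy
    exact ⟨d :: l, by simp [hlen], by simpa [hd] using hl, s, hs, rfl⟩

theorem subset_closure_wordOrbit [PseudoMetricSpace X] {T : Set X}
    (hT : T ⊆ ⋃ d ∈ D, f d '' T) {x₀ : X} (hx₀E : x₀ ∈ E) (hx₀T : x₀ ∈ T)
    (hshrink : ∀ ε > 0, ∃ k, ∀ l : List ι, l.length = k →
      ∀ a ∈ T, ∀ b ∈ T, dist (l.foldr f a) (l.foldr f b) < ε) :
    T ⊆ closure (wordOrbit f D E) := by
  intro x hx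
  refine Metric.mem_closure_iff.mpr fun ε hε => ?_
  obtain ⟨k, hk⟩ := hshrink ε hε
  obtain ⟨l, hlen, hl, s, hs, rfl⟩ := exists_foldr_eq_of_subset_iUnion_image hT k hx
  exact ⟨l.foldr f x₀, mem_iUnion₂.mpr ⟨l, hl, x₀, hx₀E, rfl⟩, hk l hlen s hs x₀ hx₀T⟩

end WordOrbit

theorem interior_connected_of_chain_general (n : ℕ) (A : Matrix (Fin n) (Fin n) ℤ)
    (hexp : ∀ μ ∈ (A.map (Int.cast : ℤ → ℂ)).charpoly.roots, 1 < ‖μ‖)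
    (D : Set (Fin n → ℤ))
    (T : Set (Fin n → ℝ)) (hTc : IsCompact T)
    (hTset : (fun x => (intMatToReal A).mulVec x) '' T
      = ⋃ d ∈ D, (fun x => x + intVecToReal d) '' T)
    (E : Set (Fin n → ℝ)) (hE : IsConnected E) (hEint : E ⊆ interior T)
    (hmeet : ∀ d ∈ D,
      (E ∩ (fun x => (intMatToReal A)⁻¹.mulVec (x + intVecToReal d)) '' E).Nonempty) :
    IsConnected (interior T) := by
  set B := intMatToReal A
  have hB : (B.map Complex.ofReal).IsExpanding := by
    have hmap : B.map Complex.ofReal = A.map (Int.cast : ℤ → ℂ) := by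
      ext; simp [B, intMatToReal]
    rwa [hmap]
  have hdet : IsUnit B.det := (det_ne_zero_of_isExpanding_map_ofReal hB).isUnit
  set φ : (Fin n → ℤ) → (Fin n → ℝ) → Fin n → ℝ := fun d x => B⁻¹ *ᵥ (x + intVecToReal d)
  have hT : T = ⋃ d ∈ D, φ d '' T := eq_iUnion_image_inv_mulVec_add hdet intVecToReal hTset
  have hφ : ∀ d ∈ D, MapsTo (φ d) (interior T) (interior T) := fun d hd =>
    mapsTo_iff_image_subset.mpr <| ((isOpenMap_inv_mulVec_add hdet _).image_interior_subset T).trans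
      (interior_mono ((subset_biUnion_of_mem (u := fun d => φ d '' T) hd).trans_eq hT.symm))
  obtain ⟨x₀, hx₀⟩ := hE.nonempty
  have hdense : T ⊆ closure (wordOrbit φ D E) :=
    subset_closure_wordOrbit hT.subset hx₀ (interior_subset (hEint hx₀)) fun _ hε =>
      exists_forall_dist_foldr_mulVec_add_lt (tendsto_inv_pow_of_isExpanding_map_ofReal hB)
        intVecToReal hTc.isBounded hε
  exact (isConnected_wordOrbit hE (fun d _ => by fun_prop) hmeet).subset_closure
    (wordOrbit_subset hEint hφ) (interior_subset.trans hdense)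

/-- if there is a connected set `E ⊆ int(T)` with `E ∩ φ_d(E) ≠ ∅` for
each digit `d ∈ D` (where `φ_d(x) = A⁻¹(x + d)`), then `int(T)` is connected. -/
theorem interior_connected_of_chain (n : ℕ) (A : Matrix (Fin n) (Fin n) ℤ)
    (hexp : ∀ μ ∈ (A.map (Int.cast : ℤ → ℂ)).charpoly.roots, 1 < ‖μ‖)
    (D : Set (Fin n → ℤ))
    (hD : ∀ z : Fin n → ℤ, ∃! d, d ∈ D ∧ ∃ y : Fin n → ℤ, z = d + A.mulVec y)
    (T : Set (Fin n → ℝ)) (hTne : T.Nonempty) (hTc : IsCompact T)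
    (hTset : (fun x => (intMatToReal A).mulVec x) '' T
      = ⋃ d ∈ D, (fun x => x + intVecToReal d) '' T)
    (E : Set (Fin n → ℝ)) (hE : IsConnected E) (hEint : E ⊆ interior T)
    (hmeet : ∀ d ∈ D,
      (E ∩ (fun x => (intMatToReal A)⁻¹.mulVec (x + intVecToReal d)) '' E).Nonempty) :
    IsConnected (interior T) :=
  interior_connected_of_chain_general n A hexp D T hTc hTset E hE hEint hmeet
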